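/- arXiv:2402.13624 — 2 statements merged into one kernel-verified Lean document; each statement's English description precedes it below -/
import Mathlib

section
/- Let C = (V,λ) be a temporal clique with injective labeling λ. Then there exists a temporal bi-clique D = (A,B,λ') with |V| = |A| = |B| such that for every bi-spanner S_D of D, there is a spanner S_C of C with |S_C| ≤ |S_D|. -/
/-!
Formalization framework for temporal graphs, temporal paths, spanners,
bi-spanners, and related notions from the paper on temporal spanners of
temporal cliques and bi-cliques.

A temporal graph on vertex type `V` is given by a labeling `lab : Sym2 V → L`
(only values on actual edges matter) together with an edge set
`E : Set (Sym2 V)`.  A temporal path is a nonempty list of vertices whose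
consecutive pairs are edges of the allowed edge set and whose labels are
non-decreasing along the path (non-strict temporal path).
-/

namespace TS

variable {V : Type} {L : Type} [LinearOrder L]

/-- The list of (undirected) edges traversed by a list of vertices. -/
def pathEdges (p : List V) : List (Sym2 V) :=
  (p.zip p.tail).map fun q => s(q.1, q.2)

/-- `p` is a temporal path using only edges from `S`, labelled by `lab`:
nonempty, all edges in `S`, labels non-decreasing along the path. -/
def IsTemporalPath (lab : Sym2 V → L) (S : Set (Sym2 V)) (p : List V) : Prop :=
  p ≠ [] ∧ (∀ e ∈ pathEdges p, e ∈ S) ∧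
    (pathEdges p).Chain' fun e f => lab e ≤ lab f

/-- `u` reaches `v` via a temporal path contained in `S`. -/
def Reaches (lab : Sym2 V → L) (S : Set (Sym2 V)) (u v : V) : Prop :=
  ∃ p : List V, p.head? = some u ∧ p.getLast? = some v ∧ IsTemporalPath lab S p

/-- Edge set of the complete graph on `V`. -/
def cliqueEdges (V : Type) : Set (Sym2 V) := {e | ¬ e.IsDiag}

/-- Edge set `A ⊗ B` of the complete bipartite graph with parts `α` and `β`. -/
def bicliqueEdges (α β : Type) : Set (Sym2 (α ⊕ β)) :=
  {e | ∃ a b, e = s(Sum.inl a, Sum.inr b)}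

/-- `S` is a spanner of the temporal graph with edge set `E`:
`S ⊆ E` and every vertex reaches every other vertex within `S`. -/
def IsSpanner (lab : Sym2 V → L) (E S : Set (Sym2 V)) : Prop :=
  S ⊆ E ∧ ∀ u v : V, Reaches lab S u v

/-- `S` is a bi-spanner of the temporal bi-clique with parts `α`, `β`:
`S ⊆ α ⊗ β` and every `a ∈ α` reaches every `b ∈ β` within `S`. -/
def IsBiSpanner {α β : Type} (lab : Sym2 (α ⊕ β) → L) (S : Set (Sym2 (α ⊕ β))) : Prop :=
  S ⊆ bicliqueEdges α β ∧ ∀ (a : α) (b : β), Reaches lab S (Sum.inl a) (Sum.inr b)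

/-- `σ_cl n`: the minimum number `m` such that every temporal clique on `n`
vertices admits a spanner with at most `m` edges. -/
noncomputable def sigmaCl (n : ℕ) : ℕ :=
  sInf {m | ∀ lab : Sym2 (Fin n) → ℕ, ∃ S : Finset (Sym2 (Fin n)),
    IsSpanner lab (cliqueEdges (Fin n)) (↑S) ∧ S.card ≤ m}

/-- `σ_bc n`: the minimum number `m` such that every temporal bi-clique with
`n` vertices on each side admits a bi-spanner with at most `m` edges. -/
noncomputable def sigmaBc (n : ℕ) : ℕ :=
  sInf {m | ∀ lab : Sym2 (Fin n ⊕ Fin n) → ℕ, ∃ S : Finset (Sym2 (Fin n ⊕ Fin n)),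
    IsBiSpanner lab (↑S) ∧ S.card ≤ m}

/-- `In(v,t)`: vertices reaching `v` via a temporal path (in edge set `E`)
all of whose labels are at most `t`. -/
def InSet (lab : Sym2 V → L) (E : Set (Sym2 V)) (v : V) (t : L) : Set V :=
  {u | ∃ p : List V, p.head? = some u ∧ p.getLast? = some v ∧
    IsTemporalPath lab E p ∧ ∀ e ∈ pathEdges p, lab e ≤ t}

/-- `Out(v,t)`: vertices that `v` reaches via a temporal path (in edge set `E`)
all of whose labels are at least `t`. -/
def OutSet (lab : Sym2 V → L) (E : Set (Sym2 V)) (v : V) (t : L) : Set V :=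
  {w | ∃ p : List V, p.head? = some v ∧ p.getLast? = some w ∧
    IsTemporalPath lab E p ∧ ∀ e ∈ pathEdges p, t ≤ lab e}

/-- `In(e)` for the edge `e = {u,v}`. -/
def InEdge (lab : Sym2 V → L) (E : Set (Sym2 V)) (u v : V) : Set V :=
  InSet lab E u (lab s(u, v)) ∪ InSet lab E v (lab s(u, v))

/-- `Out(e)` for the edge `e = {u,v}`. -/
def OutEdge (lab : Sym2 V → L) (E : Set (Sym2 V)) (u v : V) : Set V :=
  OutSet lab E u (lab s(u, v)) ∪ OutSet lab E v (lab s(u, v))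

variable {α β : Type}

/-- In a bi-clique, `b` is the earliest neighbor `π⁻(a)` of `a ∈ A`. -/
def IsEarliestNbrA (lab : Sym2 (α ⊕ β) → L) (a : α) (b : β) : Prop :=
  ∀ b' : β, lab s(Sum.inl a, Sum.inr b) ≤ lab s(Sum.inl a, Sum.inr b')

/-- In a bi-clique, `a` is the earliest neighbor `π⁻(b)` of `b ∈ B`. -/
def IsEarliestNbrB (lab : Sym2 (α ⊕ β) → L) (b : β) (a : α) : Prop :=
  ∀ a' : α, lab s(Sum.inl a, Sum.inr b) ≤ lab s(Sum.inl a', Sum.inr b)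

/-- In a bi-clique, `b` is the latest neighbor `π⁺(a)` of `a ∈ A`. -/
def IsLatestNbrA (lab : Sym2 (α ⊕ β) → L) (a : α) (b : β) : Prop :=
  ∀ b' : β, lab s(Sum.inl a, Sum.inr b') ≤ lab s(Sum.inl a, Sum.inr b)

/-- In a bi-clique, `a` is the latest neighbor `π⁺(b)` of `b ∈ B`. -/
def IsLatestNbrB (lab : Sym2 (α ⊕ β) → L) (b : β) (a : α) : Prop :=
  ∀ a' : α, lab s(Sum.inl a', Sum.inr b) ≤ lab s(Sum.inl a, Sum.inr b)

/-- The bi-clique is extremally matched: both the set `M⁻` of earliest edges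
and the set `M⁺` of latest edges form perfect matchings, i.e. the earliest-
(resp. latest-) neighbor maps of the two sides are mutually inverse. -/
def ExtremallyMatched (lab : Sym2 (α ⊕ β) → L) : Prop :=
  (∃ (f : α → β) (g : β → α),
    (∀ a, IsEarliestNbrA lab a (f a)) ∧ (∀ b, IsEarliestNbrB lab b (g b)) ∧
    (∀ a, g (f a) = a) ∧ (∀ b, f (g b) = b)) ∧
  (∃ (f : α → β) (g : β → α),
    (∀ a, IsLatestNbrA lab a (f a)) ∧ (∀ b, IsLatestNbrB lab b (g b)) ∧
    (∀ a, g (f a) = a) ∧ (∀ b, f (g b) = b))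

/-- `a ∈ A` is dismountable: there is `a' ≠ a` with
`λ({a, π⁻(a')}) ≤ λ({a', π⁻(a')})`. -/
def DismountableA (lab : Sym2 (α ⊕ β) → L) (a : α) : Prop :=
  ∃ (a' : α) (b : β), a' ≠ a ∧ IsEarliestNbrA lab a' b ∧
    lab s(Sum.inl a, Sum.inr b) ≤ lab s(Sum.inl a', Sum.inr b)

/-- `b ∈ B` is dismountable: there is `b' ≠ b` with
`λ({b', π⁺(b')}) ≤ λ({b, π⁺(b')})`. -/
def DismountableB (lab : Sym2 (α ⊕ β) → L) (b : β) : Prop :=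
  ∃ (b' : β) (a : α), b' ≠ b ∧ IsLatestNbrB lab b' a ∧
    lab s(Sum.inl a, Sum.inr b') ≤ lab s(Sum.inl a, Sum.inr b)

/-- The edge `{a', b'}` is `e`-reverted for `e = {a,b}`:
`λ({a', b}) ≤ λ({π⁺(b'), b})` or `λ({π⁻(a'), a}) ≤ λ({b', a})`. -/
def Reverted (lab : Sym2 (α ⊕ β) → L) (a : α) (b : β) (a' : α) (b' : β) : Prop :=
  (∃ a'' : α, IsLatestNbrB lab b' a'' ∧
    lab s(Sum.inl a', Sum.inr b) ≤ lab s(Sum.inl a'', Sum.inr b)) ∨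
  (∃ b'' : β, IsEarliestNbrA lab a' b'' ∧
    lab s(Sum.inl a, Sum.inr b'') ≤ lab s(Sum.inl a, Sum.inr b'))

/-- `M(e)`: the set of edges of the bi-clique that are *not* `e`-reverted,
for `e = {a,b}`. -/
def MSet (lab : Sym2 (α ⊕ β) → L) (a : α) (b : β) : Set (Sym2 (α ⊕ β)) :=
  {e | ∃ (a' : α) (b' : β), e = s(Sum.inl a', Sum.inr b') ∧ ¬ Reverted lab a b a' b'}

/-- `ind_{a}({a,b})`: the (1-based) rank of the edge `{a,b}` among the edges
incident to `a ∈ A`, ordered increasingly by label. -/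
def indA [Fintype β] (lab : Sym2 (α ⊕ β) → ℕ) (a : α) (b : β) : ℕ :=
  (Finset.univ.filter fun b' : β =>
    lab s(Sum.inl a, Sum.inr b') ≤ lab s(Sum.inl a, Sum.inr b)).card

/-- `ind_{b}({a,b})`: the (1-based) rank of the edge `{a,b}` among the edges
incident to `b ∈ B`, ordered increasingly by label. -/
def indB [Fintype α] (lab : Sym2 (α ⊕ β) → ℕ) (a : α) (b : β) : ℕ :=
  (Finset.univ.filter fun a' : α =>
    lab s(Sum.inl a', Sum.inr b) ≤ lab s(Sum.inl a, Sum.inr b)).card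

/-- Underlying symmetric label function of the shifted matching graph `SM_n`:
the edge `{a_i, b_j}` gets label `(j - i) mod n`. -/
def smFun (n : ℕ) : (Fin n ⊕ Fin n) → (Fin n ⊕ Fin n) → ℕ
  | Sum.inl i, Sum.inr j => (n + (j : ℕ) - (i : ℕ)) % n
  | Sum.inr j, Sum.inl i => (n + (j : ℕ) - (i : ℕ)) % n
  | _, _ => 0

theorem smFun_symm (n : ℕ) : ∀ x y, smFun n x y = smFun n y x := by
  rintro (i | i) (j | j) <;> rfl

/-- The labeling of the shifted matching graph `SM_n`. -/
def smLab (n : ℕ) : Sym2 (Fin n ⊕ Fin n) → ℕ :=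
  Sym2.lift ⟨smFun n, smFun_symm n⟩

end TS

namespace TS

section Aux

variable {V W : Type}

lemma pathEdges_cons_cons (a b : V) (l : List V) :
    pathEdges (a :: b :: l) = s(a, b) :: pathEdges (b :: l) := rfl

lemma pathEdges_map (f : V → W) : ∀ l : List V,
    pathEdges (l.map f) = (pathEdges l).map (Sym2.map f)
  | [] => rfl
  | [_] => rfl
  | a :: b :: l => by
      have ih := pathEdges_map f (b :: l)
      simp only [List.map_cons] at ih ⊢
      rw [pathEdges_cons_cons, pathEdges_cons_cons, ih, List.map_cons,
        Sym2.map_pair_eq]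

variable [DecidableEq V]

/-- Remove consecutive duplicates. -/
def dd : List V → List V
  | [] => []
  | [a] => [a]
  | a :: b :: l => if a = b then dd (b :: l) else a :: dd (b :: l)

lemma dd_head? : ∀ l : List V, (dd l).head? = l.head?
  | [] => rfl
  | [_] => rfl
  | a :: b :: l => by
      by_cases h : a = b
      · simp [dd, h, dd_head? (b :: l)]
      · simp [dd, h]

lemma dd_getLast? : ∀ l : List V, (dd l).getLast? = l.getLast?
  | [] => rfl
  | [_] => rfl
  | a :: b :: l => by
      by_cases h : a = b
      · simp only [dd, if_pos h, dd_getLast? (b :: l), List.getLast?_cons_cons]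
      · have hh := dd_head? (b :: l)
        obtain ⟨t, ht⟩ : ∃ t, dd (b :: l) = b :: t := by
          cases hdd : dd (b :: l) with
          | nil => rw [hdd] at hh; simp at hh
          | cons c t =>
              rw [hdd] at hh; simp at hh; exact ⟨t, by rw [hh]⟩
        have ih := dd_getLast? (b :: l)
        rw [ht] at ih
        simp only [dd, if_neg h, ht, List.getLast?_cons_cons]
        exact ih

lemma dd_pathEdges_sublist : ∀ l : List V, List.Sublist (pathEdges (dd l)) (pathEdges l)
  | [] => List.Sublist.refl _
  | [_] => List.Sublist.refl _
  | a :: b :: l => by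
      by_cases h : a = b
      · simp only [dd, if_pos h, pathEdges_cons_cons]
        exact (dd_pathEdges_sublist (b :: l)).cons _
      · have hh := dd_head? (b :: l)
        obtain ⟨t, ht⟩ : ∃ t, dd (b :: l) = b :: t := by
          cases hdd : dd (b :: l) with
          | nil => rw [hdd] at hh; simp at hh
          | cons c t =>
              rw [hdd] at hh; simp at hh; exact ⟨t, by rw [hh]⟩
        have ih := dd_pathEdges_sublist (b :: l)
        rw [ht] at ih
        simp only [dd, if_neg h, ht, pathEdges_cons_cons]
        exact ih.cons₂ _

lemma dd_not_diag : ∀ l : List V, ∀ e ∈ pathEdges (dd l), ¬ e.IsDiag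
  | [] => by simp [dd, pathEdges]
  | [_] => by simp [dd, pathEdges]
  | a :: b :: l => by
      by_cases h : a = b
      · simpa only [dd, if_pos h] using dd_not_diag (b :: l)
      · have hh := dd_head? (b :: l)
        obtain ⟨t, ht⟩ : ∃ t, dd (b :: l) = b :: t := by
          cases hdd : dd (b :: l) with
          | nil => rw [hdd] at hh; simp at hh
          | cons c t =>
              rw [hdd] at hh; simp at hh; exact ⟨t, by rw [hh]⟩
        have ih := dd_not_diag (b :: l)
        rw [ht] at ih
        simp only [dd, if_neg h, ht, pathEdges_cons_cons, List.mem_cons]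
        rintro e (rfl | he)
        · simpa using h
        · exact ih e he

end Aux

/-- for a temporal clique `C = (V, λ)` with injective labeling,
there is a temporal bi-clique `D` with both sides equal to `V` (so
`|V| = |A| = |B|`) such that every bi-spanner `S_D` of `D` yields a spanner
`S_C` of `C` with `|S_C| ≤ |S_D|`. -/
theorem stmt2 {V : Type} [Fintype V] [DecidableEq V] (lab : Sym2 V → ℕ)
    (hinj : Set.InjOn lab (cliqueEdges V)) :
    ∃ lab' : Sym2 (V ⊕ V) → ℕ,
      ∀ SD : Finset (Sym2 (V ⊕ V)), IsBiSpanner lab' (↑SD) →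
        ∃ SC : Finset (Sym2 V),
          IsSpanner lab (cliqueEdges V) (↑SC) ∧ SC.card ≤ SD.card := by
  classical
  set proj : V ⊕ V → V := Sum.elim id id with hproj
  refine ⟨fun e => lab (Sym2.map proj e), fun SD hSD => ?_⟩
  obtain ⟨-, hreach⟩ := hSD
  set SC : Finset (Sym2 V) :=
    (SD.filter fun e => ¬ (Sym2.map proj e).IsDiag).image (Sym2.map proj) with hSC
  refine ⟨SC, ⟨?_, ?_⟩, ?_⟩
  · intro e he
    simp only [hSC, Finset.coe_image, Set.mem_image, Finset.mem_coe,
      Finset.mem_filter] at he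
    obtain ⟨e', ⟨-, hd⟩, rfl⟩ := he
    exact hd
  · intro u v
    obtain ⟨p, hph, hpl, hpne, hpS, hpchain⟩ := hreach u v
    refine ⟨dd (p.map proj), ?_, ?_, ?_, ?_, ?_⟩
    · rw [dd_head?, List.head?_map, hph]; rfl
    · rw [dd_getLast?, List.getLast?_map, hpl]; rfl
    · intro h
      have := dd_head? (p.map proj)
      rw [h, List.head?_map, hph] at this
      simp at this
    · intro e he
      have hmem : e ∈ pathEdges (p.map proj) :=
        (dd_pathEdges_sublist (p.map proj)).mem he
      have hd : ¬ e.IsDiag := dd_not_diag (p.map proj) e he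
      rw [pathEdges_map, List.mem_map] at hmem
      obtain ⟨e', he', rfl⟩ := hmem
      simp only [hSC, Finset.coe_image, Set.mem_image, Finset.mem_coe,
        Finset.mem_filter]
      exact ⟨e', ⟨hpS e' he', hd⟩, rfl⟩
    · have hsub : List.Sublist ((pathEdges (dd (p.map proj))).map lab)
          ((pathEdges (p.map proj)).map lab) :=
        (dd_pathEdges_sublist (p.map proj)).map lab
      have h1 : (pathEdges (p.map proj)).map lab =
          (pathEdges p).map fun e => lab (Sym2.map proj e) := by
        rw [pathEdges_map, List.map_map]; rfl
      have h2 : List.Chain' (· ≤ ·)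
          ((pathEdges p).map fun e => lab (Sym2.map proj e)) :=
        List.isChain_map _ |>.mpr hpchain
      rw [h1] at hsub
      have := h2.sublist hsub
      exact (List.isChain_map lab).mp this
  · rw [hSC]
    exact Finset.card_image_le.trans (Finset.card_filter_le _ _)

end TS
end

section
/- Let D = (A,B,λ) be a temporal bi-clique with injective labeling λ and let e ∈ A⊗B. Then there exists a set F ⊆ A⊗B with |F| ≤ |In(e)| + |Out(e)| − 3 such that every vertex in In(e) reaches every vertex in Out(e) via a temporal path contained in F. -/
/-!
For a vertex `u` outside a target set `T`, consider the latest label at which `u` can leave and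
still reach `T` (by a temporal path, within the allowed edges). Along the edge realising it these
latest departures strictly increase: otherwise, by injectivity of the labels, the path would
have to shuttle back and forth on that single edge. So these edges, one per vertex of
`In(e) \ {a, b}`, form a forest in which every vertex of `In(e)` still reaches `{a, b}` by time
`λ(e)`. Reversing time gives such a forest for `Out(e)`, and the two forests together with `e`
have at most `(|In(e)| - 2) + (|Out(e)| - 2) + 1` edges.
-/

namespace TS

section Reachability

variable {V L : Type} [LinearOrder L] {lab : Sym2 V → L} {S S' : Set (Sym2 V)} {u v w : V}

def ReachesInto (lab : Sym2 V → L) (S : Set (Sym2 V)) (u : V) (T : Set V) : Prop :=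
  ∃ x ∈ T, Reaches lab S u x

theorem pathEdges_cons_cons_s12 (p : List V) :
    pathEdges (u :: v :: p) = s(u, v) :: pathEdges (v :: p) := rfl

theorem isTemporalPath_iff {p : List V} :
    IsTemporalPath lab S p ↔ p ≠ [] ∧ (∀ e ∈ pathEdges p, e ∈ S) ∧
      (pathEdges p).IsChain (fun e f => lab e ≤ lab f) := Iff.rfl

theorem isTemporalPath_sep_iff {P : Sym2 V → Prop} {p : List V} :
    IsTemporalPath lab {e ∈ S | P e} p ↔ IsTemporalPath lab S p ∧ ∀ e ∈ pathEdges p, P e := by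
  simp only [isTemporalPath_iff, Set.mem_ofPred_eq]
  grind

theorem isTemporalPath_cons_cons_iff {p : List V} :
    IsTemporalPath lab S (u :: v :: p) ↔
      s(u, v) ∈ S ∧ IsTemporalPath lab {e ∈ S | lab s(u, v) ≤ lab e} (v :: p) := by
  have : IsTrans (Sym2 V) (fun e f => lab e ≤ lab f) := ⟨fun _ _ _ => le_trans⟩
  rw [isTemporalPath_sep_iff]
  simp only [isTemporalPath_iff, pathEdges_cons_cons_s12, List.mem_cons, forall_eq_or_imp, ne_eq,
    reduceCtorEq, not_false_eq_true, true_and, List.isChain_iff_pairwise, List.pairwise_cons]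
  tauto

theorem Reaches.refl (lab : Sym2 V → L) (S : Set (Sym2 V)) (u : V) : Reaches lab S u u :=
  ⟨[u], rfl, rfl, List.cons_ne_nil _ _, by simp [pathEdges], List.isChain_nil⟩

theorem Reaches.cons (huv : s(u, v) ∈ S) (h : Reaches lab {e ∈ S | lab s(u, v) ≤ lab e} v w) :
    Reaches lab S u w := by
  obtain ⟨_ | ⟨x, p⟩, hhead, hlast, hp⟩ := h
  · exact absurd rfl hp.1
  · obtain rfl : x = v := Option.some_inj.1 hhead
    exact ⟨u :: x :: p, rfl, by rwa [List.getLast?_cons_cons],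
      isTemporalPath_cons_cons_iff.2 ⟨huv, hp⟩⟩

theorem Reaches.single (huv : s(u, v) ∈ S) : Reaches lab S u v :=
  .cons huv (.refl _ _ _)

theorem Reaches.mono (h : Reaches lab S u v) (hS : S ⊆ S') : Reaches lab S' u v :=
  let ⟨p, hhead, hlast, hne, hp, hchain⟩ := h
  ⟨p, hhead, hlast, hne, fun e he => hS (hp e he), hchain⟩

@[elab_as_elim]
theorem Reaches.head_induction_on {motive : ∀ S u, Reaches lab S u w → Prop}
    (h : Reaches lab S u w) (refl : ∀ S, motive S w (.refl lab S w))
    (cons : ∀ S u v (huv : s(u, v) ∈ S) (h : Reaches lab {e ∈ S | lab s(u, v) ≤ lab e} v w),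
      motive {e ∈ S | lab s(u, v) ≤ lab e} v h → motive S u (h.cons huv)) :
    motive S u h := by
  obtain ⟨p, hhead, hlast, hp⟩ := h
  induction p generalizing S u with
  | nil => exact absurd rfl hp.1
  | cons x p ih =>
    obtain rfl : x = u := Option.some_inj.1 hhead
    cases p with
    | nil =>
      obtain rfl : x = w := Option.some_inj.1 hlast
      exact refl S
    | cons y p =>
      rw [List.getLast?_cons_cons] at hlast
      obtain ⟨hxy, hp⟩ := isTemporalPath_cons_cons_iff.1 hp
      exact cons S x y hxy ⟨_, rfl, hlast, hp⟩ (ih rfl hlast hp)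

theorem reaches_iff : Reaches lab S u w ↔
    u = w ∨ ∃ v, s(u, v) ∈ S ∧ Reaches lab {e ∈ S | lab s(u, v) ≤ lab e} v w := by
  refine ⟨fun h => ?_, ?_⟩
  · induction h using Reaches.head_induction_on with
    | refl S => exact .inl rfl
    | cons S u v huv h _ => exact .inr ⟨v, huv, h⟩
  · rintro (rfl | ⟨v, huv, h⟩)
    exacts [.refl _ _ _, h.cons huv]

theorem Reaches.append (h : Reaches lab S u v) (h' : Reaches lab S' v w)
    (hle : ∀ e ∈ S, ∀ f ∈ S', lab e ≤ lab f) : Reaches lab (S ∪ S') u w := by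
  induction h using Reaches.head_induction_on with
  | refl S => exact h'.mono Set.subset_union_right
  | cons S u x hux _ ih =>
    refine .cons (Or.inl hux) ((ih fun e he f hf => hle e he.1 f hf).mono ?_)
    rintro f (⟨hf, hle'⟩ | hf)
    · exact ⟨Or.inl hf, hle'⟩
    · exact ⟨Or.inr hf, hle _ hux f hf⟩

theorem Reaches.toDual (h : Reaches lab S u v) : Reaches (OrderDual.toDual ∘ lab) S v u := by
  induction h using Reaches.head_induction_on with
  | refl S => exact .refl _ _ _
  | cons S u x hux _ ih =>
    have hxu : s(x, u) ∈ ({s(u, x)} : Set (Sym2 V)) := Sym2.eq_swap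
    refine (ih.append (Reaches.single hxu) ?_).mono ?_
    · rintro e he f rfl
      exact he.2
    · rintro f (hf | rfl)
      exacts [hf.1, hux]

theorem reaches_toDual_iff :
    Reaches (OrderDual.toDual ∘ lab) S u v ↔ Reaches lab S v u :=
  ⟨Reaches.toDual, Reaches.toDual⟩

theorem reaches_of_mem_pair {x y : V} (hx : x ∈ ({u, v} : Set V)) (hy : y ∈ ({u, v} : Set V)) :
    Reaches lab {s(u, v)} x y := by
  rcases hx with rfl | rfl <;> rcases hy with rfl | rfl
  exacts [.refl _ _ _, .single rfl, .single Sym2.eq_swap, .refl _ _ _]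

end Reachability

section Forest

variable {V L : Type} [LinearOrder L] {lab : Sym2 V → L} {E : Set (Sym2 V)} {T : Set V}

def departures (lab : Sym2 V → L) (E : Set (Sym2 V)) (T : Set V) (u : V) : Set L :=
  {ℓ | ∃ y, s(u, y) ∈ E ∧ lab s(u, y) = ℓ ∧ ReachesInto lab {e ∈ E | ℓ ≤ lab e} y T}

theorem exists_latest_departure [Finite V] {u : V} (h : ReachesInto lab E u T) (hu : u ∉ T) :
    ∃ y, s(u, y) ∈ E ∧ ReachesInto lab {e ∈ E | lab s(u, y) ≤ lab e} y T ∧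
      ∀ ℓ ∈ departures lab E T u, ℓ ≤ lab s(u, y) := by
  obtain ⟨x, hx, h⟩ := h
  rcases reaches_iff.1 h with rfl | ⟨y, huy, hy⟩
  · exact absurd hx hu
  have hfin : (departures lab E T u).Finite :=
    (Set.finite_range lab).subset fun _ ⟨y, _, hy, _⟩ => ⟨s(u, y), hy⟩
  obtain ⟨_, ⟨z, huz, rfl, hz⟩, hmax⟩ :=
    Set.exists_max_image _ id hfin ⟨_, y, huy, rfl, x, hx, hy⟩
  exact ⟨z, huz, hz, hmax⟩

/-- Every edge of such a path is a departure from `u` or `y` no earlier than `s(u, y)`, hence is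
`s(u, y)` itself by injectivity: the path can only shuttle along that edge. -/
theorem not_reachesInto_of_departures_le {S : Set (Sym2 V)} {u y c : V}
    (hinj : Set.InjOn lab E) (huy : s(u, y) ∈ E)
    (hu : ∀ ℓ ∈ departures lab E T u, ℓ ≤ lab s(u, y))
    (hy : ∀ ℓ ∈ departures lab E T y, ℓ ≤ lab s(u, y)) (huT : u ∉ T) (hyT : y ∉ T)
    (hc : c ∈ s(u, y)) (hS : S ⊆ {e ∈ E | lab s(u, y) ≤ lab e}) : ¬ ReachesInto lab S c T := by
  rintro ⟨x, hx, h⟩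
  induction h using Reaches.head_induction_on with
  | refl S =>
    rcases Sym2.mem_iff.1 hc with rfl | rfl
    exacts [huT hx, hyT hx]
  | cons S c c' hcc' h ih =>
    have hdep : lab s(c, c') ∈ departures lab E T c :=
      ⟨c', (hS hcc').1, rfl, x, hx, h.mono fun e he => ⟨(hS he.1).1, he.2⟩⟩
    have hle : lab s(c, c') ≤ lab s(u, y) := by
      rcases Sym2.mem_iff.1 hc with rfl | rfl
      exacts [hu _ hdep, hy _ hdep]
    have hedge : s(c, c') = s(u, y) := hinj (hS hcc').1 huy (hle.antisymm (hS hcc').2)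
    exact ih (hedge ▸ Sym2.mem_mk_right c c') fun e he => hS he.1

theorem exists_departures_gt {u y : V} (hinj : Set.InjOn lab E) (huy : s(u, y) ∈ E)
    (hu : ∀ ℓ ∈ departures lab E T u, ℓ ≤ lab s(u, y)) (huT : u ∉ T) (hyT : y ∉ T)
    (hy : ReachesInto lab {e ∈ E | lab s(u, y) ≤ lab e} y T) :
    ∃ ℓ ∈ departures lab E T y, lab s(u, y) < ℓ := by
  by_contra! hle
  exact not_reachesInto_of_departures_le hinj huy hu hle huT hyT (Sym2.mem_mk_right u y)
    subset_rfl hy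

theorem reachesInto_of_successor [Finite V] {F : Set (Sym2 V)} {I : Set V} {nxt : V → V}
    {d : V → L} (hF : ∀ u ∈ I \ T, s(u, nxt u) ∈ F ∧ lab s(u, nxt u) = d u)
    (hnxt : ∀ u ∈ I \ T, nxt u ∈ T ∨ nxt u ∈ I \ T ∧ d u < d (nxt u)) :
    ∀ u ∈ I \ T, ReachesInto lab {e ∈ F | d u ≤ lab e} u T := by
  have : IsTrans V fun v u => d u < d v := ⟨fun _ _ _ h₁ h₂ => h₂.trans h₁⟩
  have : Std.Irrefl fun v u : V => d u < d v := ⟨fun _ => lt_irrefl _⟩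
  intro u
  induction u using (Finite.wellFounded_of_trans_of_irrefl fun v u => d u < d v).induction with
  | _ u ih =>
  intro hu
  obtain ⟨huF, hlab⟩ := hF u hu
  rcases hnxt u hu with hT | ⟨hI, hlt⟩
  · exact ⟨nxt u, hT, .single ⟨huF, hlab.ge⟩⟩
  · obtain ⟨x, hx, h⟩ := ih (nxt u) hlt hI
    exact ⟨x, hx, .cons ⟨huF, hlab.ge⟩ (h.mono fun e he =>
      ⟨⟨he.1, hlt.le.trans he.2⟩, hlab.trans_le (hlt.le.trans he.2)⟩)⟩

theorem exists_forest_reachesInto [Finite V] (hinj : Set.InjOn lab E) (T : Set V) :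
    ∃ F ⊆ E, F.ncard ≤ ({u | ReachesInto lab E u T} \ T).ncard ∧
      ∀ u, ReachesInto lab E u T → ReachesInto lab F u T := by
  obtain hV | hV := isEmpty_or_nonempty V
  · exact ⟨∅, Set.empty_subset E, by simp, fun u => isEmptyElim u⟩
  set I := {u | ReachesInto lab E u T}
  choose! nxt hnxt using fun u (hu : u ∈ I \ T) => exists_latest_departure hu.1 hu.2
  have hstep : ∀ u ∈ I \ T, nxt u ∈ T ∨
      nxt u ∈ I \ T ∧ lab s(u, nxt u) < lab s(nxt u, nxt (nxt u)) := by
    intro u hu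
    obtain ⟨huy, hy, hmax⟩ := hnxt u hu
    by_cases hyT : nxt u ∈ T
    · exact .inl hyT
    have hyI : nxt u ∈ I \ T := ⟨hy.imp fun _ ⟨hx, h⟩ => ⟨hx, h.mono (Set.sep_subset _ _)⟩, hyT⟩
    obtain ⟨ℓ, hℓ, hlt⟩ := exists_departures_gt hinj huy hmax hu.2 hyT hy
    exact .inr ⟨hyI, hlt.trans_le ((hnxt _ hyI).2.2 ℓ hℓ)⟩
  refine ⟨(fun u => s(u, nxt u)) '' (I \ T), Set.image_subset_iff.2 fun u hu => (hnxt u hu).1,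
    Set.ncard_image_le (Set.toFinite _), fun u hu => ?_⟩
  by_cases huT : u ∈ T
  · exact ⟨u, huT, .refl _ _ _⟩
  obtain ⟨x, hx, h⟩ := reachesInto_of_successor (d := fun u => lab s(u, nxt u))
    (fun u hu => ⟨Set.mem_image_of_mem (fun u => s(u, nxt u)) hu, rfl⟩) hstep u ⟨hu, huT⟩
  exact ⟨x, hx, h.mono (Set.sep_subset _ _)⟩

end Forest

section InOut

variable {V L : Type} [LinearOrder L] {lab : Sym2 V → L} {E : Set (Sym2 V)} {u v w : V}

theorem mem_inSet_iff {t : L} : w ∈ InSet lab E v t ↔ Reaches lab {e ∈ E | lab e ≤ t} w v := by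
  simp only [InSet, Reaches, isTemporalPath_sep_iff, Set.mem_ofPred_eq]

theorem mem_outSet_iff {t : L} : w ∈ OutSet lab E v t ↔ Reaches lab {e ∈ E | t ≤ lab e} v w := by
  simp only [OutSet, Reaches, isTemporalPath_sep_iff, Set.mem_ofPred_eq]

theorem inEdge_eq :
    InEdge lab E u v = {w | ReachesInto lab {e ∈ E | lab e ≤ lab s(u, v)} w {u, v}} := by
  ext w
  simp [InEdge, ReachesInto, mem_inSet_iff]

theorem outEdge_eq : OutEdge lab E u v =
    {w | ReachesInto (OrderDual.toDual ∘ lab) {e ∈ E | lab s(u, v) ≤ lab e} w {u, v}} := by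
  ext w
  simp [OutEdge, ReachesInto, mem_outSet_iff, reaches_toDual_iff]

theorem pair_subset_inEdge : {u, v} ⊆ InEdge lab E u v := by
  rw [inEdge_eq]
  exact fun x hx => ⟨x, hx, .refl _ _ _⟩

theorem pair_subset_outEdge : {u, v} ⊆ OutEdge lab E u v := by
  rw [outEdge_eq]
  exact fun x hx => ⟨x, hx, .refl _ _ _⟩

end InOut

theorem exists_connector_inEdge_outEdge {V L : Type} [Finite V] [LinearOrder L]
    {lab : Sym2 V → L} {E : Set (Sym2 V)} (hinj : Set.InjOn lab E) {x y : V}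
    (hxy : s(x, y) ∈ E) (hne : x ≠ y) :
    ∃ F ⊆ E, F.ncard ≤ (InEdge lab E x y).ncard + (OutEdge lab E x y).ncard - 3 ∧
      ∀ u ∈ InEdge lab E x y, ∀ w ∈ OutEdge lab E x y, Reaches lab F u w := by
  obtain ⟨F₁, hF₁E, hF₁card, hF₁⟩ :=
    exists_forest_reachesInto (hinj.mono (Set.sep_subset _ (lab · ≤ lab s(x, y)))) {x, y}
  obtain ⟨F₂, hF₂E, hF₂card, hF₂⟩ := exists_forest_reachesInto
    (OrderDual.toDual.injective.comp_injOn (hinj.mono (Set.sep_subset _ (lab s(x, y) ≤ lab ·))))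
    {x, y}
  rw [← inEdge_eq] at hF₁card
  rw [← outEdge_eq] at hF₂card
  refine ⟨F₁ ∪ {s(x, y)} ∪ F₂, ?_, ?_, fun u hu w hw => ?_⟩
  · exact Set.union_subset (Set.union_subset (hF₁E.trans (Set.sep_subset _ _))
      (Set.singleton_subset_iff.2 hxy)) (hF₂E.trans (Set.sep_subset _ _))
  · rw [← Set.ncard_sdiff_add_ncard_of_subset pair_subset_inEdge,
      ← Set.ncard_sdiff_add_ncard_of_subset pair_subset_outEdge, Set.ncard_pair hne]
    have := Set.ncard_union_le (F₁ ∪ {s(x, y)}) F₂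
    have := Set.ncard_union_le F₁ {s(x, y)}
    rw [Set.ncard_singleton] at this
    omega
  rw [inEdge_eq] at hu
  rw [outEdge_eq] at hw
  obtain ⟨x', hx', hux'⟩ := hF₁ u hu
  obtain ⟨y', hy', hwy'⟩ := hF₂ w hw
  refine (hux'.append (reaches_of_mem_pair hx' hy') ?_).append (reaches_toDual_iff.1 hwy') ?_
  · rintro e he _ rfl
    exact (hF₁E he).2
  · rintro e (he | rfl) f hf
    exacts [(hF₁E he).2.trans (hF₂E hf).2, (hF₂E hf).2]

/-- in a bi-clique with injective labeling, for every edge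
`e = {a,b}` there is a set `F ⊆ A ⊗ B` of at most `|In(e)| + |Out(e)| − 3`
edges connecting every vertex of `In(e)` to every vertex of `Out(e)` by a
temporal path inside `F`. -/
theorem stmt12 {α β : Type} [Fintype α] [Fintype β]
    (lab : Sym2 (α ⊕ β) → ℕ) (hinj : Set.InjOn lab (bicliqueEdges α β))
    (a : α) (b : β) :
    ∃ F : Set (Sym2 (α ⊕ β)), F ⊆ bicliqueEdges α β ∧
      F.ncard ≤ (InEdge lab (bicliqueEdges α β) (Sum.inl a) (Sum.inr b)).ncard +
        (OutEdge lab (bicliqueEdges α β) (Sum.inl a) (Sum.inr b)).ncard - 3 ∧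
      ∀ u ∈ InEdge lab (bicliqueEdges α β) (Sum.inl a) (Sum.inr b),
        ∀ v ∈ OutEdge lab (bicliqueEdges α β) (Sum.inl a) (Sum.inr b),
          Reaches lab F u v :=
  exists_connector_inEdge_outEdge hinj ⟨a, b, rfl⟩ Sum.inl_ne_inr

end TS
end
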